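/- Let A = ℤ[1/6][X, Y] and Δ' = X³ − Y². The element 1/(X·Δ') of the localization A[1/(XΔ')] does not lie in the A-submodule generated by the images of A[1/Δ'] and A[1/X]; in particular the quotient A-module A[1/(XΔ')]/(im A[1/Δ'] + im A[1/X]) is nonzero. Moreover, every element of this quotient module is annihilated by some power of X·Δ'. (This quotient computes the nonzero first Čech cohomology H¹ of the compactified moduli stack of elliptic curves over ℤ[1/6], which contributes the torsion-free divisible pattern generated by the class θ in π₋₂₁ Tmf[1/6].) -/

import Mathlib

/-!
`X` and `Δ' = X³ - Y²` form a regular sequence in `A` generating a proper ideal, and for such a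
pair `p, d` one has `pᵐ dⁿ ∉ (pᵐ⁺¹, dⁿ⁺¹)`: reducing modulo `p` peels off one power of `p` at a
time, and at `m = 0` a relation `dⁿ ∈ (p, dⁿ⁺¹)` would make `d` a unit modulo `p`.
A relation `1/(pd) = a/dⁿ + b/pᵐ` in `A[1/(pd)]` clears to exactly such a membership.
Torsion is immediate, since every element of `A[1/(pd)]` is `r/(pd)ⁿ`.
-/

open MvPolynomial

section RegularPair

variable {A : Type*} [CommRing A] {p d : A}

theorem dvd_of_dvd_mul_pow (hd : ∀ b, p ∣ b * d → p ∣ b) {b : A} :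
    ∀ n : ℕ, p ∣ b * d ^ n → p ∣ b
  | 0, h => by simpa using h
  | n + 1, h => dvd_of_dvd_mul_pow hd n (hd _ (by rwa [pow_succ, ← mul_assoc] at h))

theorem pow_mul_pow_notMem_span_pow_succ (hp : IsLeftRegular p) (hd : ∀ b, p ∣ b * d → p ∣ b)
    (hspan : Ideal.span {p, d} ≠ ⊤) (m n : ℕ) :
    p ^ m * d ^ n ∉ Ideal.span {p ^ (m + 1), d ^ (n + 1)} := by
  rw [Ideal.mem_span_pair]
  induction m with
  | zero =>
    rintro ⟨a, b, h⟩
    obtain ⟨c, hc⟩ : p ∣ 1 - b * d :=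
      dvd_of_dvd_mul_pow hd n ⟨a, by linear_combination -h⟩
    refine hspan <| (Ideal.eq_top_iff_one _).2 <| Ideal.mem_span_pair.2 ⟨c, b, ?_⟩
    linear_combination -hc
  | succ m ih =>
    rintro ⟨a, b, h⟩
    obtain ⟨b', rfl⟩ : p ∣ b := dvd_of_dvd_mul_pow hd (n + 1)
      ⟨p ^ m * d ^ n - a * p ^ (m + 1), by linear_combination h⟩
    exact ih ⟨a, b', hp (by linear_combination h)⟩

end RegularPair

section Localization

variable {A : Type*} [CommRing A] (p d : A) {LΔ LX LXΔ : Type*} [CommRing LΔ] [CommRing LX]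
  [CommRing LXΔ] [Algebra A LΔ] [Algebra A LX] [Algebra A LXΔ] [IsLocalization.Away d LΔ]
  [IsLocalization.Away p LX] [IsLocalization.Away (p * d) LXΔ]

theorem exists_mul_algebraMap_eq_of_mem_span_range_awayToAway {x : LXΔ}
    (hx : x ∈ Submodule.span A
      (Set.range ⇑(IsLocalization.Away.awayToAwayLeft (S := LΔ) (P := LXΔ) d p) ∪
        Set.range ⇑(IsLocalization.Away.awayToAwayRight (S := LX) (P := LXΔ) p d))) :
    ∃ (m n : ℕ) (a b : A),
      x * algebraMap A LXΔ (p ^ m * d ^ n) = algebraMap A LXΔ (a * p ^ m + b * d ^ n) := by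
  let f : LΔ →ₐ[A] LXΔ := { IsLocalization.Away.awayToAwayLeft d p with
    commutes' := IsLocalization.Away.awayToAwayLeft_eq d p }
  let g : LX →ₐ[A] LXΔ := { IsLocalization.Away.awayToAwayRight p d with
    commutes' := IsLocalization.Away.awayToAwayRight_eq p d }
  have hle : Submodule.span A (Set.range f ∪ Set.range g) ≤
      LinearMap.range f.toLinearMap ⊔ LinearMap.range g.toLinearMap :=
    Submodule.span_le.2 <| Set.union_subset
      (fun _ hy => Submodule.mem_sup_left hy) (fun _ hy => Submodule.mem_sup_right hy)
  obtain ⟨_, ⟨s, rfl⟩, _, ⟨t, rfl⟩, rfl⟩ := Submodule.mem_sup.1 (hle hx)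
  obtain ⟨n, a, hs⟩ := IsLocalization.Away.surj d s
  obtain ⟨m, b, ht⟩ := IsLocalization.Away.surj p t
  have hs' := congrArg f hs
  have ht' := congrArg g ht
  simp only [map_mul, map_pow, AlgHom.commutes] at hs' ht'
  refine ⟨m, n, a, b, ?_⟩
  simp only [map_mul, map_add, map_pow, AlgHom.toLinearMap_apply]
  linear_combination algebraMap A LXΔ p ^ m * hs' + algebraMap A LXΔ d ^ n * ht'

theorem invSelf_notMem_span_range_awayToAway (hp : IsLeftRegular p)
    (hd : ∀ b, p ∣ b * d → p ∣ b) (hspan : Ideal.span {p, d} ≠ ⊤) :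
    IsLocalization.Away.invSelf (S := LXΔ) (p * d) ∉ Submodule.span A
      (Set.range ⇑(IsLocalization.Away.awayToAwayLeft (S := LΔ) (P := LXΔ) d p) ∪
        Set.range ⇑(IsLocalization.Away.awayToAwayRight (S := LX) (P := LXΔ) p d)) := by
  intro hmem
  obtain ⟨m, n, a, b, h⟩ := exists_mul_algebraMap_eq_of_mem_span_range_awayToAway p d hmem
  have hinv := IsLocalization.Away.mul_invSelf (S := LXΔ) (p * d)
  -- multiply `h` by `pd` and use `pd · (pd)⁻¹ = 1`
  have hA : algebraMap A LXΔ (p ^ m * d ^ n) =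
      algebraMap A LXΔ ((a * d) * p ^ (m + 1) + (b * p) * d ^ (n + 1)) := by
    simp only [map_mul, map_add, map_pow] at h hinv ⊢
    linear_combination (-(algebraMap A LXΔ p ^ m * algebraMap A LXΔ d ^ n)) * hinv +
      algebraMap A LXΔ p * algebraMap A LXΔ d * h
  obtain ⟨k, hk⟩ := IsLocalization.Away.exists_of_eq (p * d) hA
  -- `A → A[1/(pd)]` need not be injective; its kernel is absorbed by raising both exponents by `k`
  refine pow_mul_pow_notMem_span_pow_succ hp hd hspan (m + k) (n + k) <|
    Ideal.mem_span_pair.2 ⟨a * d ^ (k + 1), b * p ^ (k + 1), ?_⟩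
  linear_combination -hk

theorem exists_pow_smul_mem_span_range_awayToAway (z : LXΔ) :
    ∃ n : ℕ, (p * d) ^ n • z ∈ Submodule.span A
      (Set.range ⇑(IsLocalization.Away.awayToAwayLeft (S := LΔ) (P := LXΔ) d p) ∪
        Set.range ⇑(IsLocalization.Away.awayToAwayRight (S := LX) (P := LXΔ) p d)) := by
  obtain ⟨n, r, hr⟩ := IsLocalization.Away.surj (p * d) z
  refine ⟨n, Submodule.subset_span <| Or.inl ⟨algebraMap A LΔ r, ?_⟩⟩
  rw [IsLocalization.Away.awayToAwayLeft_eq, ← hr, Algebra.smul_def, map_pow, mul_comm]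

end Localization

section Cusp

variable {σ R : Type*} [CommRing R] [IsDomain R] {i j : σ}

theorem X_dvd_of_X_dvd_mul_X_pow_sub_X_pow (hij : i ≠ j) {k l : ℕ} (hk : k ≠ 0)
    {b : MvPolynomial σ R} (h : X i ∣ b * (X i ^ k - X j ^ l)) : X i ∣ b := by
  refine (X_prime.dvd_or_dvd h).resolve_right fun hd => ?_
  have hXj : (X i : MvPolynomial σ R) ∣ X j ^ l := by
    simpa only [sub_sub_cancel] using dvd_sub (dvd_pow_self _ hk) hd
  exact hij (X_dvd_X.1 (X_prime.dvd_of_dvd_pow hXj))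

theorem span_X_X_pow_sub_X_pow_ne_top {k l : ℕ} (hk : k ≠ 0) (hl : l ≠ 0) :
    Ideal.span {(X i : MvPolynomial σ R), X i ^ k - X j ^ l} ≠ ⊤ := by
  refine ne_top_of_le_ne_top (RingHom.ker_ne_top (constantCoeff (σ := σ) (R := R))) ?_
  rw [Ideal.span_le, Set.pair_subset_iff]
  simp [zero_pow hk, zero_pow hl]

end Cusp

/-- Let `A = ℤ[1/6][X, Y]` (with `X` playing the role of the modular form `c₄` and `Y` that of
`c₆`) and `Δ' = X³ − Y²`.  In `A[1/(X·Δ')]`, the element `1/(X·Δ')` does not lie in the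
`A`-submodule generated by the images of `A[1/Δ']` and `A[1/X]`; in particular the quotient
`A`-module is nonzero.  Moreover, every element of this quotient is annihilated by some power of
`X·Δ'`.  Here `ℤ[1/6]` is any realization `R6` of the localization of `ℤ` away from `6`, and the
three localizations of `A` are likewise arbitrary realizations. -/
theorem cech_h1_nonzero_and_torsion
    (R6 : Type*) [CommRing R6] [IsLocalization.Away (6 : ℤ) R6]
    (LΔ LX LXΔ : Type*) [CommRing LΔ] [CommRing LX] [CommRing LXΔ]
    [Algebra (MvPolynomial (Fin 2) R6) LΔ] [Algebra (MvPolynomial (Fin 2) R6) LX]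
    [Algebra (MvPolynomial (Fin 2) R6) LXΔ]
    [IsLocalization.Away (X 0 ^ 3 - X 1 ^ 2 : MvPolynomial (Fin 2) R6) LΔ]
    [IsLocalization.Away (X 0 : MvPolynomial (Fin 2) R6) LX]
    [IsLocalization.Away ((X 0 : MvPolynomial (Fin 2) R6) * (X 0 ^ 3 - X 1 ^ 2)) LXΔ]
    (M : Submodule (MvPolynomial (Fin 2) R6) LXΔ)
    (hM : M = Submodule.span (MvPolynomial (Fin 2) R6)
      (Set.range ⇑(IsLocalization.Away.awayToAwayLeft (S := LΔ) (P := LXΔ)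
          (X 0 ^ 3 - X 1 ^ 2 : MvPolynomial (Fin 2) R6) (X 0)) ∪
        Set.range ⇑(IsLocalization.Away.awayToAwayRight (S := LX) (P := LXΔ)
          (X 0 : MvPolynomial (Fin 2) R6) (X 0 ^ 3 - X 1 ^ 2)))) :
    (IsLocalization.Away.invSelf (S := LXΔ)
        ((X 0 : MvPolynomial (Fin 2) R6) * (X 0 ^ 3 - X 1 ^ 2)) ∉ M) ∧
      Nontrivial (LXΔ ⧸ M) ∧
      ∀ z : LXΔ,
        ∃ n : ℕ, ((X 0 : MvPolynomial (Fin 2) R6) * (X 0 ^ 3 - X 1 ^ 2)) ^ n • z ∈ M := by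
  have : IsDomain R6 := IsLocalization.isDomain_of_le_nonZeroDivisors (R := ℤ) (S := R6)
    (hM := powers_le_nonZeroDivisors_of_noZeroDivisors (by norm_num : (6 : ℤ) ≠ 0))
  have hnotMem := invSelf_notMem_span_range_awayToAway (LΔ := LΔ) (LX := LX) (LXΔ := LXΔ)
    (X 0 : MvPolynomial (Fin 2) R6) (X 0 ^ 3 - X 1 ^ 2) (IsRegular.of_ne_zero (X_ne_zero 0)).left
    (fun _ => X_dvd_of_X_dvd_mul_X_pow_sub_X_pow (by decide) (by decide))
    (span_X_X_pow_sub_X_pow_ne_top (by decide) (by decide))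
  subst hM
  exact ⟨hnotMem, Submodule.Quotient.nontrivial_iff.2 fun h => hnotMem (h ▸ Submodule.mem_top),
    exists_pow_smul_mem_span_range_awayToAway _ _⟩
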